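/- In g_{p₊,p₋}: for every integer m with 0 ≤ m ≤ p₊ − 1, (q₊^{p₋} − q₊^{-p₋})^{2m}·F₊^m·E₊^m = (−1)^m · ∏_{s=0}^{m−1} (C₊ + q₊^{p₋(2s+1)}·K^{p₋} + q₊^{-p₋(2s+1)}·K^{-p₋}); and for every integer m' with 0 ≤ m' ≤ p₋ − 1, (q₋^{p₊} − q₋^{-p₊})^{2m'}·E₋^{m'}·F₋^{m'} = (−1)^{m'} · ∏_{s'=0}^{m'−1} (C₋ + q₋^{-p₊(2s'+1)}·K^{p₊} + q₋^{p₊(2s'+1)}·K^{-p₊}). -/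

import Mathlib

noncomputable section

/-- Generators of the quantum group `g_{p₊,p₋}`. -/
inductive QGGen : Type
  | Ep | Fp | Em | Fm | K

open FreeAlgebra QGGen

/-- `q = exp(iπ/p)`. -/
def rootOfUnity (p : ℕ) : ℂ := Complex.exp (Real.pi * Complex.I / p)

/-- The defining relations of the quantum group `g_{p₊,p₋}`. -/
inductive QGRel (pp pm : ℕ) : FreeAlgebra ℂ QGGen → FreeAlgebra ℂ QGGen → Prop
  | EpNil : QGRel pp pm (ι ℂ Ep ^ pp) 0
  | FpNil : QGRel pp pm (ι ℂ Fp ^ pp) 0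
  | EmNil : QGRel pp pm (ι ℂ Em ^ pm) 0
  | FmNil : QGRel pp pm (ι ℂ Fm ^ pm) 0
  | KOrd : QGRel pp pm (ι ℂ K ^ (2 * pp * pm)) 1
  | KEp : QGRel pp pm (ι ℂ K * ι ℂ Ep)
      (algebraMap ℂ (FreeAlgebra ℂ QGGen) ((rootOfUnity pp) ^ 2) * (ι ℂ Ep * ι ℂ K))
  | KFp : QGRel pp pm (ι ℂ K * ι ℂ Fp)
      (algebraMap ℂ (FreeAlgebra ℂ QGGen) (((rootOfUnity pp) ^ 2)⁻¹) * (ι ℂ Fp * ι ℂ K))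
  | KEm : QGRel pp pm (ι ℂ K * ι ℂ Em)
      (algebraMap ℂ (FreeAlgebra ℂ QGGen) ((rootOfUnity pm) ^ 2) * (ι ℂ Em * ι ℂ K))
  | KFm : QGRel pp pm (ι ℂ K * ι ℂ Fm)
      (algebraMap ℂ (FreeAlgebra ℂ QGGen) (((rootOfUnity pm) ^ 2)⁻¹) * (ι ℂ Fm * ι ℂ K))
  | EpEm : QGRel pp pm (ι ℂ Ep * ι ℂ Em) (ι ℂ Em * ι ℂ Ep)
  | FpFm : QGRel pp pm (ι ℂ Fp * ι ℂ Fm) (ι ℂ Fm * ι ℂ Fp)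
  | EpFm : QGRel pp pm (ι ℂ Ep * ι ℂ Fm) (ι ℂ Fm * ι ℂ Ep)
  | EmFp : QGRel pp pm (ι ℂ Em * ι ℂ Fp) (ι ℂ Fp * ι ℂ Em)
  | EpFp : QGRel pp pm (ι ℂ Ep * ι ℂ Fp - ι ℂ Fp * ι ℂ Ep)
      (algebraMap ℂ (FreeAlgebra ℂ QGGen)
          (((rootOfUnity pp) ^ pm - ((rootOfUnity pp) ^ pm)⁻¹)⁻¹) *
        (ι ℂ K ^ pm - ι ℂ K ^ (2 * pp * pm - pm)))
  | EmFm : QGRel pp pm (ι ℂ Em * ι ℂ Fm - ι ℂ Fm * ι ℂ Em)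
      (algebraMap ℂ (FreeAlgebra ℂ QGGen)
          (((rootOfUnity pm) ^ pp - ((rootOfUnity pm) ^ pp)⁻¹)⁻¹) *
        (ι ℂ K ^ pp - ι ℂ K ^ (2 * pp * pm - pp)))

/-- The quantum group `g_{p₊,p₋}`. -/
abbrev QG (pp pm : ℕ) : Type := RingQuot (QGRel pp pm)

/-- The image of a generator in `g_{p₊,p₋}`. -/
def gen (pp pm : ℕ) (x : QGGen) : QG pp pm :=
  RingQuot.mkAlgHom ℂ (QGRel pp pm) (ι ℂ x)

/-- The Casimir element `C₊` of `g_{p₊,p₋}`. -/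
def CasP (pp pm : ℕ) : QG pp pm :=
  -(algebraMap ℂ (QG pp pm) (rootOfUnity pp ^ pm) * gen pp pm K ^ (2 * pp * pm - pm)) -
    algebraMap ℂ (QG pp pm) ((rootOfUnity pp ^ pm)⁻¹) * gen pp pm K ^ pm -
    algebraMap ℂ (QG pp pm) ((rootOfUnity pp ^ pm - (rootOfUnity pp ^ pm)⁻¹) ^ 2) *
      (gen pp pm Ep * gen pp pm Fp)

/-- The Casimir element `C₋` of `g_{p₊,p₋}`. -/
def CasM (pp pm : ℕ) : QG pp pm :=
  -(algebraMap ℂ (QG pp pm) (rootOfUnity pm ^ pp) * gen pp pm K ^ (2 * pp * pm - pp)) -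
    algebraMap ℂ (QG pp pm) ((rootOfUnity pm ^ pp)⁻¹) * gen pp pm K ^ pp -
    algebraMap ℂ (QG pp pm) ((rootOfUnity pm ^ pp - (rootOfUnity pm ^ pp)⁻¹) ^ 2) *
      (gen pp pm Em * gen pp pm Fm)


/-! ### Auxiliary lemmas -/

lemma rootOfUnity_ne_zero (p : ℕ) : rootOfUnity p ≠ 0 := Complex.exp_ne_zero _

lemma lam_cancel (l : ℂ) : l ^ 2 * l⁻¹ = l := by
  rcases eq_or_ne l 0 with h | h
  · simp [h]
  · field_simp [pow_two]

lemma rootOfUnity_pow_two_mul (p : ℕ) (hp : p ≠ 0) : rootOfUnity p ^ (2 * p) = 1 := by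
  rw [rootOfUnity, ← Complex.exp_nat_mul]
  have hp0 : (p : ℂ) ≠ 0 := Nat.cast_ne_zero.mpr hp
  have h : ((2 * p : ℕ) : ℂ) * (↑Real.pi * Complex.I / p) = 2 * ↑Real.pi * Complex.I := by
    push_cast
    field_simp
  rw [h, Complex.exp_two_pi_mul_I]

lemma smul_conj_pow {A : Type*} [Ring A] [Algebra ℂ A] {k x : A} {c : ℂ}
    (h : k * x = c • (x * k)) : ∀ n : ℕ, k * x ^ n = (c ^ n) • (x ^ n * k) := by
  intro n
  induction n with
  | zero => simp
  | succ n ih =>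
    rw [pow_succ', ← mul_assoc, h, smul_mul_assoc, mul_assoc, ih, mul_smul_comm, smul_smul,
      ← mul_assoc, ← pow_succ', ← pow_succ']

lemma smul_conj_pow' {A : Type*} [Ring A] [Algebra ℂ A] {k x : A} {c : ℂ}
    (h : k * x = c • (x * k)) : ∀ n : ℕ, k ^ n * x = (c ^ n) • (x * k ^ n) := by
  intro n
  induction n with
  | zero => simp
  | succ n ih =>
    rw [pow_succ, mul_assoc, h, mul_smul_comm, ← mul_assoc, ih, smul_mul_assoc, smul_smul,
      mul_assoc, ← pow_succ, ← pow_succ']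

lemma pow_sub_inv (c : ℂ) (N n : ℕ) (hn : n ≤ N) (hN : c ^ N = 1) :
    c ^ (N - n) = (c ^ n)⁻¹ := by
  have h : c ^ (N - n) * c ^ n = 1 := by rw [← pow_add, Nat.sub_add_cancel hn, hN]
  exact eq_inv_of_mul_eq_one_left h

lemma key_lemma {A : Type*} [Ring A] [Algebra ℂ A] (e f kp km C : A) (q lam : ℂ)
    (hq : q ≠ 0) (hlam : lam = q - q⁻¹)
    (hkpe : kp * e = (q ^ 2) • (e * kp))
    (hkme : km * e = (q ^ 2)⁻¹ • (e * km))
    (hef : e * f - f * e = lam⁻¹ • (kp - km))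
    (hC : C = -(q • km) - q⁻¹ • kp - (lam ^ 2) • (e * f)) :
    ∀ m : ℕ, (lam ^ (2 * m)) • (f ^ m * e ^ m) =
      ((-1 : ℂ) ^ m) • ((List.range m).map
        (fun s => C + (q ^ (2 * s + 1)) • kp + (q ^ (2 * s + 1))⁻¹ • km)).prod := by
  have hfe : f * e = e * f - lam⁻¹ • (kp - km) := by rw [← hef]; abel
  have hef2 : lam ^ 2 • (e * f) - lam ^ 2 • (f * e) = lam • (kp - km) := by
    have h2 : lam ^ 2 • (e * f - f * e) = lam ^ 2 • (lam⁻¹ • (kp - km)) := by rw [hef]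
    rw [smul_sub, smul_smul, lam_cancel] at h2
    exact h2
  have claimA : lam ^ 2 • (f * e) = -(C + q • kp + q⁻¹ • km) := by
    rw [hfe, hC, smul_sub, smul_smul, lam_cancel, hlam]
    module
  have s1 : q * (q ^ 2)⁻¹ = q⁻¹ := by field_simp [pow_two]
  have s2 : q⁻¹ * q ^ 2 = q := by field_simp [pow_two]
  have hCe : C * e = e * C := by
    have h4 : lam ^ 2 • (e * (e * f)) - lam ^ 2 • (e * (f * e)) = lam • (e * kp - e * km) := by
      calc lam ^ 2 • (e * (e * f)) - lam ^ 2 • (e * (f * e))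
          = e * (lam ^ 2 • (e * f) - lam ^ 2 • (f * e)) := by
            rw [mul_sub, mul_smul_comm, mul_smul_comm]
        _ = e * (lam • (kp - km)) := by rw [hef2]
        _ = lam • (e * kp - e * km) := by rw [mul_smul_comm, mul_sub]
    calc C * e = -(q • (km * e)) - q⁻¹ • (kp * e) - lam ^ 2 • (e * (f * e)) := by
          rw [hC]; simp only [sub_mul, neg_mul, smul_mul_assoc, mul_assoc]
      _ = -((q * (q ^ 2)⁻¹) • (e * km)) - (q⁻¹ * q ^ 2) • (e * kp) - lam ^ 2 • (e * (f * e)) := by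
          rw [hkme, hkpe, smul_smul, smul_smul]
      _ = -(q⁻¹ • (e * km)) - q • (e * kp) - lam ^ 2 • (e * (f * e)) := by rw [s1, s2]
      _ = -(q • (e * km)) - q⁻¹ • (e * kp) - lam ^ 2 • (e * (e * f)) := by
          have h5 : lam ^ 2 • (e * (f * e))
              = lam ^ 2 • (e * (e * f)) - lam • (e * kp - e * km) := by
            rw [← h4]; abel
          rw [h5, hlam]
          module
      _ = e * C := by
          rw [hC]; simp only [mul_sub, mul_neg, mul_smul_comm]
  have hCen : ∀ n : ℕ, C * e ^ n = e ^ n * C := fun n => (Commute.pow_right hCe n : _)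
  intro m
  induction m with
  | zero => simp
  | succ m ih =>
    have s3 : q * (q ^ 2) ^ m = q ^ (2 * m + 1) := by ring
    have s4 : q⁻¹ * ((q ^ 2)⁻¹) ^ m = (q ^ (2 * m + 1))⁻¹ := by
      rw [inv_pow, ← mul_inv, s3]
    have step2 : (C + q • kp + q⁻¹ • km) * e ^ m
        = e ^ m * (C + (q ^ (2 * m + 1)) • kp + (q ^ (2 * m + 1))⁻¹ • km) := by
      rw [add_mul, add_mul, mul_add, mul_add, smul_mul_assoc, smul_mul_assoc,
        smul_conj_pow hkpe m, smul_conj_pow hkme m, hCen m, mul_smul_comm, mul_smul_comm,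
        smul_smul, smul_smul, s3, s4]
    have hsplit : f ^ (m + 1) * e ^ (m + 1) = f ^ m * ((f * e) * e ^ m) := by
      rw [pow_succ, pow_succ', mul_assoc, ← mul_assoc f e (e ^ m)]
    rw [hsplit]
    calc (lam ^ (2 * (m + 1))) • (f ^ m * ((f * e) * e ^ m))
        = (lam ^ (2 * m)) • (f ^ m * ((lam ^ 2 • (f * e)) * e ^ m)) := by
          rw [smul_mul_assoc, mul_smul_comm, smul_smul, ← pow_add]
          congr 2 <;> ring
      _ = (lam ^ (2 * m)) • (f ^ m * ((-(C + q • kp + q⁻¹ • km)) * e ^ m)) := by rw [claimA]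
      _ = -((lam ^ (2 * m)) • ((f ^ m * e ^ m) *
            (C + (q ^ (2 * m + 1)) • kp + (q ^ (2 * m + 1))⁻¹ • km))) := by
          rw [neg_mul, mul_neg, smul_neg, step2, ← mul_assoc]
      _ = -((((-1 : ℂ) ^ m) • ((List.range m).map
            (fun s => C + (q ^ (2 * s + 1)) • kp + (q ^ (2 * s + 1))⁻¹ • km)).prod) *
            (C + (q ^ (2 * m + 1)) • kp + (q ^ (2 * m + 1))⁻¹ • km)) := by
          rw [← smul_mul_assoc, ih]
      _ = ((-1 : ℂ) ^ (m + 1)) • ((List.range (m + 1)).map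
            (fun s => C + (q ^ (2 * s + 1)) • kp + (q ^ (2 * s + 1))⁻¹ • km)).prod := by
          rw [List.range_succ, List.map_append, List.prod_append, List.map_singleton,
            List.prod_singleton, pow_succ (-1 : ℂ) m, mul_smul, neg_one_smul,
            smul_mul_assoc, smul_neg]

lemma flip_sub_smul {A : Type*} [Ring A] [Algebra ℂ A] {a b x : A} {l : ℂ}
    (h : a - b = l • x) : b - a = (-l) • x := by
  rw [neg_smul, ← h]; abel

lemma casM_helper {A : Type*} [Ring A] [Algebra ℂ A] (em fm kp km : A) (q' : ℂ)
    (h : em * fm - fm * em = (q' - q'⁻¹)⁻¹ • (kp - km)) :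
    -(q' • km) - q'⁻¹ • kp - ((q' - q'⁻¹) ^ 2) • (em * fm)
      = -((q'⁻¹) • km) - ((q'⁻¹)⁻¹) • kp - ((q'⁻¹ - q') ^ 2) • (fm * em) := by
  have h1 : em * fm = fm * em + (q' - q'⁻¹)⁻¹ • (kp - km) := by rw [← h]; abel
  rw [h1, smul_add, smul_smul, lam_cancel, inv_inv]
  match_scalars <;> ring

lemma gen_eq (pp pm : ℕ) (x : QGGen) :
    RingQuot.mkAlgHom ℂ (QGRel pp pm) (ι ℂ x) = gen pp pm x := rfl

lemma gen_rel_KEp (pp pm : ℕ) :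
    gen pp pm K * gen pp pm Ep = (rootOfUnity pp ^ 2) • (gen pp pm Ep * gen pp pm K) := by
  have h := RingQuot.mkAlgHom_rel ℂ (QGRel.KEp (pp := pp) (pm := pm))
  simp only [map_mul, AlgHom.commutes, gen_eq] at h
  rw [h, ← Algebra.smul_def]

lemma gen_rel_KFm (pp pm : ℕ) :
    gen pp pm K * gen pp pm Fm = ((rootOfUnity pm ^ 2)⁻¹) • (gen pp pm Fm * gen pp pm K) := by
  have h := RingQuot.mkAlgHom_rel ℂ (QGRel.KFm (pp := pp) (pm := pm))
  simp only [map_mul, AlgHom.commutes, gen_eq] at h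
  rw [h, ← Algebra.smul_def]

lemma gen_rel_EpFp (pp pm : ℕ) :
    gen pp pm Ep * gen pp pm Fp - gen pp pm Fp * gen pp pm Ep
      = ((rootOfUnity pp ^ pm - (rootOfUnity pp ^ pm)⁻¹)⁻¹) •
        (gen pp pm K ^ pm - gen pp pm K ^ (2 * pp * pm - pm)) := by
  have h := RingQuot.mkAlgHom_rel ℂ (QGRel.EpFp (pp := pp) (pm := pm))
  simp only [map_sub, map_mul, map_pow, AlgHom.commutes, gen_eq] at h
  rw [h, ← Algebra.smul_def]

lemma gen_rel_EmFm (pp pm : ℕ) :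
    gen pp pm Em * gen pp pm Fm - gen pp pm Fm * gen pp pm Em
      = ((rootOfUnity pm ^ pp - (rootOfUnity pm ^ pp)⁻¹)⁻¹) •
        (gen pp pm K ^ pp - gen pp pm K ^ (2 * pp * pm - pp)) := by
  have h := RingQuot.mkAlgHom_rel ℂ (QGRel.EmFm (pp := pp) (pm := pm))
  simp only [map_sub, map_mul, map_pow, AlgHom.commutes, gen_eq] at h
  rw [h, ← Algebra.smul_def]

/-- The products `F₊^m E₊^m` and `E₋^{m'} F₋^{m'}` expressed through the Casimir elements. -/
theorem casimir_product_identities (pp pm : ℕ) (hpp : 2 ≤ pp) (hpm : 2 ≤ pm)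
    (hco : Nat.Coprime pp pm) :
    (∀ m : ℕ, m ≤ pp - 1 →
      algebraMap ℂ (QG pp pm) ((rootOfUnity pp ^ pm - (rootOfUnity pp ^ pm)⁻¹) ^ (2 * m)) *
          (gen pp pm Fp ^ m * gen pp pm Ep ^ m) =
        algebraMap ℂ (QG pp pm) ((-1 : ℂ) ^ m) *
          ((List.range m).map (fun s =>
            CasP pp pm +
              algebraMap ℂ (QG pp pm) (rootOfUnity pp ^ (pm * (2 * s + 1))) *
                gen pp pm K ^ pm +
              algebraMap ℂ (QG pp pm) ((rootOfUnity pp ^ (pm * (2 * s + 1)))⁻¹) *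
                gen pp pm K ^ (2 * pp * pm - pm))).prod) ∧
    (∀ m' : ℕ, m' ≤ pm - 1 →
      algebraMap ℂ (QG pp pm) ((rootOfUnity pm ^ pp - (rootOfUnity pm ^ pp)⁻¹) ^ (2 * m')) *
          (gen pp pm Em ^ m' * gen pp pm Fm ^ m') =
        algebraMap ℂ (QG pp pm) ((-1 : ℂ) ^ m') *
          ((List.range m').map (fun s' =>
            CasM pp pm +
              algebraMap ℂ (QG pp pm) ((rootOfUnity pm ^ (pp * (2 * s' + 1)))⁻¹) *
                gen pp pm K ^ pp +
              algebraMap ℂ (QG pp pm) (rootOfUnity pm ^ (pp * (2 * s' + 1))) *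
                gen pp pm K ^ (2 * pp * pm - pp))).prod) := by
  refine ⟨fun m _ => ?_, fun m' _ => ?_⟩
  · have q0 : rootOfUnity pp ≠ 0 := rootOfUnity_ne_zero pp
    have hq : (rootOfUnity pp ^ pm : ℂ) ≠ 0 := pow_ne_zero _ q0
    have hr2 : ((rootOfUnity pp ^ 2 : ℂ)) ^ (2 * pp * pm) = 1 := by
      rw [← pow_mul]
      have h1 : 2 * (2 * pp * pm) = (2 * pp) * (2 * pm) := by ring
      rw [h1, pow_mul, rootOfUnity_pow_two_mul pp (by omega), one_pow]
    have hsc1 : ((rootOfUnity pp ^ 2 : ℂ)) ^ pm = (rootOfUnity pp ^ pm) ^ 2 := by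
      rw [← pow_mul, ← pow_mul, Nat.mul_comm]
    have hsc2 : ((rootOfUnity pp ^ 2 : ℂ)) ^ (2 * pp * pm - pm)
        = ((rootOfUnity pp ^ pm) ^ 2)⁻¹ := by
      rw [pow_sub_inv _ _ _ (by nlinarith) hr2, hsc1]
    have hkpe := smul_conj_pow' (gen_rel_KEp pp pm) pm
    rw [hsc1] at hkpe
    have hkme := smul_conj_pow' (gen_rel_KEp pp pm) (2 * pp * pm - pm)
    rw [hsc2] at hkme
    have hC : CasP pp pm = -((rootOfUnity pp ^ pm) • gen pp pm K ^ (2 * pp * pm - pm))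
        - (rootOfUnity pp ^ pm)⁻¹ • gen pp pm K ^ pm
        - ((rootOfUnity pp ^ pm - (rootOfUnity pp ^ pm)⁻¹) ^ 2) •
          (gen pp pm Ep * gen pp pm Fp) := by
      rw [CasP]; simp only [Algebra.smul_def]
    have key := key_lemma (gen pp pm Ep) (gen pp pm Fp) (gen pp pm K ^ pm)
      (gen pp pm K ^ (2 * pp * pm - pm)) (CasP pp pm) (rootOfUnity pp ^ pm)
      (rootOfUnity pp ^ pm - (rootOfUnity pp ^ pm)⁻¹) hq rfl hkpe hkme
      (gen_rel_EpFp pp pm) hC m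
    simp only [pow_mul] at key ⊢
    simp only [Algebra.smul_def] at key
    exact key
  · have q0 : rootOfUnity pm ≠ 0 := rootOfUnity_ne_zero pm
    have hq : ((rootOfUnity pm ^ pp)⁻¹ : ℂ) ≠ 0 := inv_ne_zero (pow_ne_zero _ q0)
    have hlam : ((rootOfUnity pm ^ pp)⁻¹ - rootOfUnity pm ^ pp : ℂ)
        = (rootOfUnity pm ^ pp)⁻¹ - ((rootOfUnity pm ^ pp)⁻¹)⁻¹ := by rw [inv_inv]
    have hr2 : (((rootOfUnity pm ^ 2 : ℂ))⁻¹) ^ (2 * pp * pm) = 1 := by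
      rw [inv_pow, ← pow_mul]
      have h1 : 2 * (2 * pp * pm) = (2 * pm) * (2 * pp) := by ring
      rw [h1, pow_mul, rootOfUnity_pow_two_mul pm (by omega), one_pow, inv_one]
    have hsc1 : (((rootOfUnity pm ^ 2 : ℂ))⁻¹) ^ pp = ((rootOfUnity pm ^ pp)⁻¹) ^ 2 := by
      rw [inv_pow, inv_pow, ← pow_mul, ← pow_mul, Nat.mul_comm]
    have hsc2 : (((rootOfUnity pm ^ 2 : ℂ))⁻¹) ^ (2 * pp * pm - pp)
        = (((rootOfUnity pm ^ pp)⁻¹) ^ 2)⁻¹ := by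
      rw [pow_sub_inv _ _ _ (by nlinarith) hr2, hsc1]
    have hkpe := smul_conj_pow' (gen_rel_KFm pp pm) pp
    rw [hsc1] at hkpe
    have hkme := smul_conj_pow' (gen_rel_KFm pp pm) (2 * pp * pm - pp)
    rw [hsc2] at hkme
    have hco2 : (-((rootOfUnity pm ^ pp - (rootOfUnity pm ^ pp)⁻¹ : ℂ)⁻¹))
        = ((rootOfUnity pm ^ pp)⁻¹ - rootOfUnity pm ^ pp : ℂ)⁻¹ := by
      rw [show ((rootOfUnity pm ^ pp)⁻¹ - rootOfUnity pm ^ pp : ℂ)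
        = -(rootOfUnity pm ^ pp - (rootOfUnity pm ^ pp)⁻¹) by ring, inv_neg]
    have hef := flip_sub_smul (gen_rel_EmFm pp pm)
    rw [hco2] at hef
    have h0 : CasM pp pm = -((rootOfUnity pm ^ pp) • gen pp pm K ^ (2 * pp * pm - pp))
        - (rootOfUnity pm ^ pp)⁻¹ • gen pp pm K ^ pp
        - ((rootOfUnity pm ^ pp - (rootOfUnity pm ^ pp)⁻¹) ^ 2) •
          (gen pp pm Em * gen pp pm Fm) := by
      rw [CasM]; simp only [Algebra.smul_def]
    have hC := h0.trans (casM_helper (gen pp pm Em) (gen pp pm Fm) (gen pp pm K ^ pp)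
      (gen pp pm K ^ (2 * pp * pm - pp)) (rootOfUnity pm ^ pp) (gen_rel_EmFm pp pm))
    have key := key_lemma (gen pp pm Fm) (gen pp pm Em) (gen pp pm K ^ pp)
      (gen pp pm K ^ (2 * pp * pm - pp)) (CasM pp pm) ((rootOfUnity pm ^ pp)⁻¹)
      ((rootOfUnity pm ^ pp)⁻¹ - rootOfUnity pm ^ pp) hq hlam hkpe hkme hef hC m'
    have hev : (((rootOfUnity pm ^ pp)⁻¹ - rootOfUnity pm ^ pp : ℂ)) ^ (2 * m')
        = ((rootOfUnity pm ^ pp - (rootOfUnity pm ^ pp)⁻¹ : ℂ)) ^ (2 * m') := by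
      rw [show ((rootOfUnity pm ^ pp)⁻¹ - rootOfUnity pm ^ pp : ℂ)
        = -(rootOfUnity pm ^ pp - (rootOfUnity pm ^ pp)⁻¹) by ring,
        Even.neg_pow (even_two_mul m')]
    rw [hev] at key
    simp only [inv_pow, inv_inv] at key
    simp only [pow_mul] at key ⊢
    simp only [Algebra.smul_def] at key
    exact key
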